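/- For the full destructive-pairs q-measure μ(A) = ν(A) - 2ν({x ∈ A : x + 1/2 ∈ A}) on [0,1] and 0 ≤ a < b ≤ 1 with b - a ≥ 1/2, the quantum integral ∫_a^b x dμ = a²/2 - b²/2 + b - 1/4; in particular the deviation from the classical integral, ∫_a^b x dx - ∫_a^b x dμ = b² - a² - b + 1/4, vanishes if and only if b = a + 1/2. -/

import Mathlib

/-!
The points of `(m, b)` whose partner `x + 1/2` also lies in `(m, b)` form
`(m, b - 1/2)`, so `F(λ) = (b - max a λ)⁺ - 2 (b - 1/2 - max a λ)⁺`. Each term is the length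
of `(a, c) ∩ (λ, ∞)` for `c = b` resp. `c = b - 1/2`, and integrates over `λ > 0` (layer cake)
to `(c² - a²) / 2`. The deviation then factors as `(b - 1/2 - a) (b - 1/2 + a)`.
-/

open MeasureTheory Set

noncomputable def destrMeas2 (A : Set ℝ) : ℝ :=
  (volume A).toReal - 2 * (volume {x | x ∈ A ∧ x + 1 / 2 ∈ A}).toReal

lemma destrMeas2_Ioo (m b : ℝ) :
    destrMeas2 (Ioo m b) = max (b - m) 0 - 2 * max (b - 1 / 2 - m) 0 := by
  have hpairs : {x | x ∈ Ioo m b ∧ x + 1 / 2 ∈ Ioo m b} = Ioo m (b - 1 / 2) := by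
    ext x
    simp only [mem_Ioo, mem_ofPred_eq]
    constructor
    · rintro ⟨⟨hmx, -⟩, -, hxb⟩
      exact ⟨hmx, by linarith⟩
    · rintro ⟨hmx, hxb⟩
      exact ⟨⟨hmx, by linarith⟩, by linarith, by linarith⟩
  rw [destrMeas2, hpairs, Real.volume_Ioo, Real.volume_Ioo, ENNReal.toReal_ofReal',
    ENNReal.toReal_ofReal']

lemma max_sub_max_eq_zero_of_lt {a c x : ℝ} (hcx : c < x) : max (c - max a x) 0 = 0 :=
  max_eq_right (by linarith [le_max_right a x])

lemma integrableOn_Ioi_max_sub_max (a c d : ℝ) :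
    IntegrableOn (fun x => max (c - max a x) 0) (Ioi d) :=
  ((by fun_prop : Continuous fun x => max (c - max a x) 0).integrableOn_Ioc (a := d) (b := c)
    ).of_forall_sdiff_eq_zero measurableSet_Ioi
    fun _ hx => max_sub_max_eq_zero_of_lt (not_le.1 fun hxc => hx.2 ⟨hx.1, hxc⟩)

lemma integral_Ioi_max_sub_max {a c : ℝ} (ha : 0 ≤ a) (hac : a ≤ c) :
    ∫ x in Ioi 0, max (c - max a x) 0 = (c ^ 2 - a ^ 2) / 2 := by
  have hcont : Continuous fun x => max (c - max a x) 0 := by fun_prop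
  have hflat : ∀ x ∈ uIcc 0 a, max (c - max a x) 0 = c - a := by
    intro x hx
    rw [uIcc_of_le ha] at hx
    rw [max_eq_left hx.2, max_eq_left (by linarith)]
  have hslope : ∀ x ∈ uIcc a c, max (c - max a x) 0 = c - x := by
    intro x hx
    rw [uIcc_of_le hac] at hx
    rw [max_eq_right hx.1, max_eq_left (by linarith [hx.2])]
  rw [setIntegral_eq_of_subset_of_forall_sdiff_eq_zero measurableSet_Ioi Ioc_subset_Ioi_self
      fun x hx => max_sub_max_eq_zero_of_lt (not_le.1 fun hxc => hx.2 ⟨hx.1, hxc⟩),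
    ← intervalIntegral.integral_of_le (ha.trans hac),
    ← intervalIntegral.integral_add_adjacent_intervals (hcont.intervalIntegrable 0 a)
      (hcont.intervalIntegrable a c),
    intervalIntegral.integral_congr hflat, intervalIntegral.integral_congr hslope,
    intervalIntegral.integral_sub intervalIntegrable_const (continuous_id'.intervalIntegrable a c),
    intervalIntegral.integral_const, intervalIntegral.integral_const, integral_id,
    smul_eq_mul, smul_eq_mul]
  ring

lemma integral_destrMeas2_Ioo_inter_Ioi {a b : ℝ} (ha : 0 ≤ a) (hlen : 1 / 2 ≤ b - a) :
    ∫ lam in Ioi 0, destrMeas2 (Ioo a b ∩ Ioi lam) = a ^ 2 / 2 - b ^ 2 / 2 + b - 1 / 4 := by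
  simp_rw [Ioo_inter_Ioi, destrMeas2_Ioo]
  rw [integral_sub (integrableOn_Ioi_max_sub_max _ _ _)
      ((integrableOn_Ioi_max_sub_max _ _ _).const_mul 2),
    MeasureTheory.integral_const_mul, integral_Ioi_max_sub_max ha (by linarith),
    integral_Ioi_max_sub_max ha (by linarith)]
  ring

theorem stmt_19_general (a b : ℝ) (ha : 0 ≤ a)
    (hlen : 1 / 2 ≤ b - a) :
    (∫ lam in Set.Ioi (0 : ℝ), destrMeas2 (Set.Ioo a b ∩ Set.Ioi lam)) =
        a ^ 2 / 2 - b ^ 2 / 2 + b - 1 / 4 ∧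
      (∫ x in a..b, x) -
          (∫ lam in Set.Ioi (0 : ℝ), destrMeas2 (Set.Ioo a b ∩ Set.Ioi lam)) =
        b ^ 2 - a ^ 2 - b + 1 / 4 ∧
      ((∫ x in a..b, x) -
          (∫ lam in Set.Ioi (0 : ℝ), destrMeas2 (Set.Ioo a b ∩ Set.Ioi lam)) = 0 ↔
        b = a + 1 / 2) := by
  rw [integral_destrMeas2_Ioo_inter_Ioi ha hlen, integral_id]
  have hdev : (b ^ 2 - a ^ 2) / 2 - (a ^ 2 / 2 - b ^ 2 / 2 + b - 1 / 4) =
      (b - 1 / 2 - a) * (b - 1 / 2 + a) := by ring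
  refine ⟨rfl, by ring, ?_⟩
  rw [hdev, mul_eq_zero]
  constructor
  · rintro (h | h) <;> linarith
  · intro h
    exact Or.inl (by linarith)

theorem stmt_19 (a b : ℝ) (ha : 0 ≤ a) (hab : a < b) (hb : b ≤ 1)
    (hlen : 1 / 2 ≤ b - a) :
    (∫ lam in Set.Ioi (0 : ℝ), destrMeas2 (Set.Ioo a b ∩ Set.Ioi lam)) =
        a ^ 2 / 2 - b ^ 2 / 2 + b - 1 / 4 ∧
      (∫ x in a..b, x) -
          (∫ lam in Set.Ioi (0 : ℝ), destrMeas2 (Set.Ioo a b ∩ Set.Ioi lam)) =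
        b ^ 2 - a ^ 2 - b + 1 / 4 ∧
      ((∫ x in a..b, x) -
          (∫ lam in Set.Ioi (0 : ℝ), destrMeas2 (Set.Ioo a b ∩ Set.Ioi lam)) = 0 ↔
        b = a + 1 / 2) :=
  stmt_19_general a b ha hlen
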